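/- arXiv:1903.04459 — 7 statements merged into one kernel-verified Lean document; each statement's English description precedes it below -/
import Mathlib

section
/- If G is an r-regular graph on n vertices admitting a distance magic labeling, then 0 is an eigenvalue of the adjacency matrix of G. -/
open SimpleGraph Finset Matrix
open scoped Classical

noncomputable def distMagic {V : Type*} [Fintype V] (G : SimpleGraph V) : Prop :=
  ∃ f : V ≃ Fin (Fintype.card V), ∃ k : ℕ,
    ∀ x : V, ∑ y ∈ G.neighborFinset x, ((f y : ℕ) + 1) = k

noncomputable def closedDistMagic {V : Type*} [Fintype V] (G : SimpleGraph V) : Prop :=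
  ∃ f : V ≃ Fin (Fintype.card V), ∃ k : ℕ,
    ∀ x : V, ∑ y ∈ insert x (G.neighborFinset x), ((f y : ℕ) + 1) = k

noncomputable def hasEigen {V : Type*} [Fintype V] (G : SimpleGraph V) (μ : ℝ) : Prop :=
  ∃ v : V → ℝ, v ≠ 0 ∧ G.adjMatrix ℝ *ᵥ v = μ • v

theorem stmt0 {V : Type*} [Fintype V] [Nonempty V] (G : SimpleGraph V) (n r : ℕ)
    (hn : Fintype.card V = n) (hreg : G.IsRegularOfDegree r)
    (hdm : distMagic G) : hasEigen G 0 := by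
  obtain ⟨f, k, hf⟩ := hdm
  rcases Nat.eq_zero_or_pos r with hr | hr
  · -- r = 0 : no edges, any nonzero vector works
    refine ⟨fun _ => 1, ?_, ?_⟩
    · intro h
      have := congrFun h (Classical.arbitrary V)
      simp at this
    · funext x
      have hempty : G.neighborFinset x = ∅ := by
        rw [← Finset.card_eq_zero, card_neighborFinset_eq_degree, hreg x, hr]
      simp [adjMatrix_mulVec_apply, hempty]
  · -- r > 0
    set v : V → ℝ := fun x => r * ((f x : ℕ) + 1) - k with hv
    refine ⟨v, ?_, ?_⟩
    · -- nonzero: pick x with a neighbor y ≠ x, then f x ≠ f y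
      obtain ⟨x⟩ := ‹Nonempty V›
      have hdeg : 0 < G.degree x := by rw [hreg x]; exact hr
      have hcard : 0 < (G.neighborFinset x).card := by
        rwa [card_neighborFinset_eq_degree, hreg x]
      obtain ⟨y, hy⟩ := Finset.card_pos.mp hcard
      rw [mem_neighborFinset] at hy
      have hxy : x ≠ y := G.ne_of_adj hy
      intro h
      have h1 : (r : ℝ) * ((f x : ℕ) + 1) = k := by
        have := congrFun h x; simpa [hv, sub_eq_zero] using this
      have h2 : (r : ℝ) * ((f y : ℕ) + 1) = k := by
        have := congrFun h y; simpa [hv, sub_eq_zero] using this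
      have : ((f x : ℕ) : ℝ) + 1 = ((f y : ℕ) : ℝ) + 1 := by
        have hr' : (r : ℝ) ≠ 0 := Nat.cast_ne_zero.mpr hr.ne'
        exact mul_left_cancel₀ hr' (h1.trans h2.symm)
      have : f x = f y := by
        have : ((f x : ℕ) : ℝ) = ((f y : ℕ) : ℝ) := by linarith
        exact_mod_cast Fin.ext (by exact_mod_cast this)
      exact hxy (f.injective this)
    · funext x
      have hsum : ∑ y ∈ G.neighborFinset x, v y = 0 := by
        have hc : (G.neighborFinset x).card = r := by
          rw [card_neighborFinset_eq_degree, hreg x]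
        simp only [hv, Finset.sum_sub_distrib, Finset.sum_const, hc, nsmul_eq_mul]
        have : ∑ y ∈ G.neighborFinset x, (r : ℝ) * ((f y : ℕ) + 1)
            = r * ∑ y ∈ G.neighborFinset x, (((f y : ℕ) : ℝ) + 1) := by
          rw [Finset.mul_sum]
        rw [this]
        have hk : ∑ y ∈ G.neighborFinset x, (((f y : ℕ) : ℝ) + 1) = k := by
          have := hf x
          push_cast [← this]
          ring
        rw [hk]; ring
      simp [adjMatrix_mulVec_apply, hsum]
end

section
/- If an r-regular graph G admits a distance magic labeling, then r is even. -/
open SimpleGraph Finset Matrix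
open scoped Classical

theorem stmt3 {V : Type*} [Fintype V] [Nonempty V] (G : SimpleGraph V) (r : ℕ)
    (hreg : G.IsRegularOfDegree r) (hdm : distMagic G) : Even r := by
  classical
  obtain ⟨f, k, hf⟩ := hdm
  have hnpos : 0 < Fintype.card V := Fintype.card_pos
  -- double counting: sum over all x of the neighbor sums
  have hdouble : ∑ x : V, ∑ y ∈ G.neighborFinset x, ((f y : ℕ) + 1)
      = ∑ y : V, r * ((f y : ℕ) + 1) := by
    have h1 : ∀ x : V, ∑ y ∈ G.neighborFinset x, ((f y : ℕ) + 1)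
        = ∑ y : V, if G.Adj x y then ((f y : ℕ) + 1) else 0 := by
      intro x
      rw [SimpleGraph.neighborFinset_eq_filter, Finset.sum_filter]
    simp_rw [h1]
    rw [Finset.sum_comm]
    congr 1
    ext y
    have h2 : ∀ x : V, (if G.Adj x y then ((f y : ℕ) + 1) else 0)
        = (if x ∈ G.neighborFinset y then ((f y : ℕ) + 1) else 0) := by
      intro x
      simp [SimpleGraph.mem_neighborFinset, SimpleGraph.adj_comm]
    simp_rw [h2]
    rw [Finset.sum_ite_mem, Finset.univ_inter, Finset.sum_const]
    have h3 : (G.neighborFinset y).card = r := hreg y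
    rw [h3, smul_eq_mul]
  -- left side is n * k
  have hleft : ∑ x : V, ∑ y ∈ G.neighborFinset x, ((f y : ℕ) + 1)
      = Fintype.card V * k := by
    simp_rw [hf]
    simp [mul_comm]
  -- right side via Gauss sum
  have hsum : ∑ y : V, ((f y : ℕ) + 1)
      = ∑ i ∈ Finset.range (Fintype.card V + 1), i := by
    rw [Equiv.sum_comp f (fun i : Fin (Fintype.card V) => (i : ℕ) + 1)]
    rw [Fin.sum_univ_eq_sum_range (fun i => i + 1) (Fintype.card V)]
    rw [Finset.sum_range_succ' (fun i => i) (Fintype.card V)]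
    simp
  have hright : ∑ y : V, r * ((f y : ℕ) + 1)
      = r * ∑ i ∈ Finset.range (Fintype.card V + 1), i := by
    rw [← Finset.mul_sum, hsum]
  have hgauss : (∑ i ∈ Finset.range (Fintype.card V + 1), i) * 2
      = (Fintype.card V + 1) * Fintype.card V := by
    rw [Finset.sum_range_id_mul_two]
    simp
  have key : Fintype.card V * k = r * ∑ i ∈ Finset.range (Fintype.card V + 1), i := by
    rw [← hleft, hdouble, hright]
  have key2 : Fintype.card V * (k * 2) = r * (Fintype.card V + 1) * Fintype.card V := by
    calc Fintype.card V * (k * 2) = (Fintype.card V * k) * 2 := by ring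
    _ = (r * ∑ i ∈ Finset.range (Fintype.card V + 1), i) * 2 := by rw [key]
    _ = r * ((∑ i ∈ Finset.range (Fintype.card V + 1), i) * 2) := by ring
    _ = r * ((Fintype.card V + 1) * Fintype.card V) := by rw [hgauss]
    _ = r * (Fintype.card V + 1) * Fintype.card V := by ring
  have hcancel : k * 2 = r * (Fintype.card V + 1) := by
    apply Nat.eq_of_mul_eq_mul_left hnpos
    rw [key2]; ring
  have heven1 : Even (r * (Fintype.card V + 1)) := ⟨k, by omega⟩
  -- handshake: Even (n * r)
  have heven2 : Even (∑ v : V, G.degree v) := by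
    rw [SimpleGraph.sum_degrees_eq_twice_card_edges]
    exact ⟨G.edgeFinset.card, by ring⟩
  have heven3 : Even (r * Fintype.card V) := by
    have h4 : ∑ v : V, G.degree v = Fintype.card V * r := by
      calc ∑ v : V, G.degree v = ∑ _v : V, r := Finset.sum_congr rfl (fun v _ => hreg v)
        _ = Fintype.card V * r := by simp [Finset.card_univ, mul_comm]
    rw [h4] at heven2
    rwa [mul_comm]
  have h5 : r * (Fintype.card V + 1) = r * Fintype.card V + r := by ring
  rw [h5, Nat.even_add] at heven1
  exact heven1.mp heven3
end

section
/- If an r-regular graph G on n vertices admits a closed distance magic labeling, then n + r is odd. -/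
open SimpleGraph Finset Matrix
open scoped Classical

theorem stmt5 {V : Type*} [Fintype V] [Nonempty V] (G : SimpleGraph V) (n r : ℕ)
    (hn : Fintype.card V = n) (hreg : G.IsRegularOfDegree r)
    (hcdm : closedDistMagic G) : Odd (n + r) := by
  obtain ⟨f, k, hf⟩ := hcdm
  have npos : 0 < n := hn ▸ Fintype.card_pos
  set g : V → ℕ := fun y => (f y : ℕ) + 1 with hg
  -- total sum of labels
  have hlab : ∑ y : V, g y = ∑ i ∈ Finset.range (Fintype.card V), (i + 1) := by
    have h := Equiv.sum_comp f (fun i : Fin (Fintype.card V) => (i : ℕ) + 1)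
    exact h.trans (Fin.sum_univ_eq_sum_range (fun j => j + 1) _)
  have hgauss : ∀ m : ℕ, 2 * ∑ i ∈ Finset.range m, (i + 1) = m * (m + 1) := by
    intro m
    induction m with
    | zero => simp
    | succ p ih => rw [Finset.sum_range_succ, Nat.mul_add, ih]; ring
  -- membership symmetry of closed neighborhoods
  have hsym : ∀ x y : V,
      (y ∈ insert x (G.neighborFinset x)) ↔ (x ∈ insert y (G.neighborFinset y)) := by
    intro x y
    rw [Finset.mem_insert, Finset.mem_insert, mem_neighborFinset, mem_neighborFinset,
      eq_comm, G.adj_comm]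
  -- double counting
  have hswap : ∑ x : V, ∑ y ∈ insert x (G.neighborFinset x), g y
      = ∑ y : V, (r + 1) * g y := by
    have h1 : ∀ x : V, ∑ y ∈ insert x (G.neighborFinset x), g y
        = ∑ y : V, if y ∈ insert x (G.neighborFinset x) then g y else 0 := by
      intro x
      rw [Finset.sum_ite_mem, Finset.univ_inter]
    simp_rw [h1]
    rw [Finset.sum_comm]
    refine Finset.sum_congr rfl fun y _ => ?_
    have : ∀ x : V, (if y ∈ insert x (G.neighborFinset x) then g y else 0)
        = (if x ∈ insert y (G.neighborFinset y) then g y else 0) := by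
      intro x; simp [hsym x y]
    simp_rw [this]
    rw [Finset.sum_ite_mem, Finset.univ_inter, Finset.sum_const,
      Finset.card_insert_of_notMem (G.notMem_neighborFinset_self y),
      G.card_neighborFinset_eq_degree, hreg y, smul_eq_mul, Nat.add_comm r 1]
  have hconst : ∑ x : V, ∑ y ∈ insert x (G.neighborFinset x), g y = n * k := by
    simp [hf, Finset.card_univ, hn]
  have key : n * k = (r + 1) * ∑ y : V, g y := by
    rw [← hconst, hswap, Finset.mul_sum]
  have key2 : 2 * (n * k) = (r + 1) * (n * (n + 1)) := by
    rw [key, hlab, hn, ← hgauss n]; ring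
  -- now parity argument
  rcases Nat.even_or_odd (n + r) with hev | hodd
  · exfalso
    rcases Nat.even_or_odd n with hne | hno
    · -- n even, so r even, contradiction with key2
      have hre : Even r := (Nat.even_add.mp hev).mp hne
      have hcancel : 2 * k = (r + 1) * (n + 1) := by
        have : n * (2 * k) = n * ((r + 1) * (n + 1)) := by
          rw [show n * (2 * k) = 2 * (n * k) by ring, key2]; ring
        exact Nat.eq_of_mul_eq_mul_left npos this
      have hoddside : Odd ((r + 1) * (n + 1)) := hre.add_one.mul hne.add_one
      rw [← hcancel, Nat.odd_iff] at hoddside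
      omega
    · -- n odd, so r odd; handshake lemma contradiction
      have hro : Odd r := by
        rw [Nat.odd_iff]
        rw [Nat.even_iff] at hev
        rw [Nat.odd_iff] at hno
        omega
      have hhs := G.sum_degrees_eq_twice_card_edges
      have : ∑ v : V, G.degree v = n * r := by
        simp [hreg _, Finset.card_univ, hn]
      rw [this] at hhs
      have hodd' : Odd (n * r) := hno.mul hro
      rw [hhs, Nat.odd_iff] at hodd'
      omega
  · exact hodd
end

section
/- Let G be a connected r-regular graph with r ≥ 2. If the line graph L(G) admits a distance magic labeling, then 2 - r is an eigenvalue of the adjacency matrix of G. -/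
open SimpleGraph Finset Matrix
open scoped Classical

/-!
Let `N` be the vertex–edge incidence matrix of the `r`-regular graph `G`. Then
`N Nᵀ = A(G) + r I` and `Nᵀ N = A(L(G)) + 2 I`, so `N` maps an eigenvector of `L(G)` with
eigenvalue `μ ≠ -2` to an eigenvector of `G` with eigenvalue `μ + 2 - r` (it is nonzero because
`Nᵀ N v = (μ + 2) v`). The line graph is `(2r - 2)`-regular, and a distance magic labeling `f`
of a `d`-regular graph with magic constant `k` satisfies `A f = k 1 = (k / d) A 1`; hence
`d f - k 1` lies in the kernel of `A`, and it is nonzero because `f` is injective. So `0` is an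
eigenvalue of `L(G)`, and `2 - r` one of `G`.
-/

namespace SimpleGraph

variable {V : Type*} (G : SimpleGraph V) {R : Type*}

theorem incMatrix_of_notMem_edgeSet [MulZeroOneClass R] {a : V} {e : Sym2 V}
    (he : e ∉ G.edgeSet) : G.incMatrix R a e = 0 :=
  G.incMatrix_of_notMem_incidenceSet fun h => he (G.incidenceSet_subset a h)

variable [Fintype V]

theorem sum_edgeSet_eq_sum_sym2 {M : Type*} [AddCommMonoid M] {g : Sym2 V → M}
    (hg : ∀ e ∉ G.edgeSet, g e = 0) : ∑ e : G.edgeSet, g e = ∑ e, g e := by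
  rw [Finset.sum_set_coe, ← edgeFinset]
  exact Finset.sum_subset (subset_univ _) fun e _ he => hg e (by simpa using he)

theorem sum_incMatrix_apply_edgeSet [NonAssocSemiring R] (a : V) :
    ∑ e : G.edgeSet, G.incMatrix R a e = G.degree a := by
  rw [G.sum_edgeSet_eq_sum_sym2 fun e => G.incMatrix_of_notMem_edgeSet]
  exact G.sum_incMatrix_apply

noncomputable def edgeIncMatrix (R : Type*) [Zero R] [One R] : Matrix V G.edgeSet R :=
  (G.incMatrix R).submatrix id (↑)

theorem edgeIncMatrix_mul_transpose [Semiring R] {r : ℕ} (hreg : G.IsRegularOfDegree r) :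
    G.edgeIncMatrix R * (G.edgeIncMatrix R)ᵀ = G.adjMatrix R + (r : R) • 1 := by
  have hsum : G.edgeIncMatrix R * (G.edgeIncMatrix R)ᵀ = G.incMatrix R * (G.incMatrix R)ᵀ := by
    ext a b
    simp only [mul_apply, transpose_apply, edgeIncMatrix, submatrix_apply, id]
    refine G.sum_edgeSet_eq_sum_sym2 (g := fun e => G.incMatrix R a e * G.incMatrix R b e)
      fun e he => by rw [G.incMatrix_of_notMem_edgeSet he, zero_mul]
  rw [hsum, incMatrix_mul_transpose]
  ext a b
  by_cases hab : a = b
  · subst hab; simp [hreg a]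
  · simp [hab, adjMatrix_apply]

theorem incMatrix_transpose_mul_apply_of_ne [Semiring R] {e e' : G.edgeSet} (hne : e ≠ e') :
    ((G.incMatrix R)ᵀ * G.incMatrix R) e e' = if G.lineGraph.Adj e e' then 1 else 0 := by
  simp only [mul_apply, transpose_apply, incMatrix_apply', ite_zero_mul_ite_zero, one_mul,
    sum_boole, incidenceSet, Set.mem_ofPred_eq, e.2, e'.2, true_and]
  split_ifs with hadj
  · obtain ⟨-, u, hu, hu'⟩ := G.lineGraph_adj_iff_exists.1 hadj
    convert Nat.cast_one (R := R)
    refine card_eq_one.2 ⟨u, eq_singleton_iff_unique_mem.2 ⟨by simp [hu, hu'], fun a ha => ?_⟩⟩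
    by_contra hau
    simp only [mem_filter, mem_univ, true_and] at ha
    exact hne (Subtype.ext (Sym2.eq_of_ne_mem hau ha.1 hu ha.2 hu'))
  · convert Nat.cast_zero (R := R)
    refine card_eq_zero.2 (eq_empty_of_forall_notMem fun a ha => hadj ?_)
    simp only [mem_filter, mem_univ, true_and] at ha
    exact G.lineGraph_adj_iff_exists.2 ⟨hne, a, ha⟩

theorem edgeIncMatrix_transpose_mul [Semiring R] :
    (G.edgeIncMatrix R)ᵀ * G.edgeIncMatrix R = G.lineGraph.adjMatrix R + (2 : R) • 1 := by
  ext e e'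
  change ((G.incMatrix R)ᵀ * G.incMatrix R) e e' = _
  by_cases hee : e = e'
  · subst hee
    simp [incMatrix_transpose_mul_diag, e.2]
  · simp [incMatrix_transpose_mul_apply_of_ne G hee, hee, adjMatrix_apply]

theorem IsRegularOfDegree.lineGraph {r : ℕ} (hreg : G.IsRegularOfDegree r) :
    G.lineGraph.IsRegularOfDegree (2 * r - 2) := by
  intro e
  have hrow : G.edgeIncMatrix ℤ *ᵥ (fun _ => 1) = fun _ => (r : ℤ) := by
    ext a
    simp [mulVec, dotProduct, edgeIncMatrix, sum_incMatrix_apply_edgeSet, hreg a]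
  have hcol : ((G.edgeIncMatrix ℤ)ᵀ *ᵥ fun _ => (r : ℤ)) e = 2 * r := by
    simp [mulVec, dotProduct, edgeIncMatrix, ← sum_mul, sum_incMatrix_apply_of_mem_edgeSet, e.2]
  have hdeg : (G.lineGraph.degree e : ℤ) + 2 = 2 * r :=
    calc (G.lineGraph.degree e : ℤ) + 2
        = ((G.lineGraph.adjMatrix ℤ + (2 : ℤ) • 1) *ᵥ fun _ => 1) e := by simp [add_mulVec]
      _ = ((G.edgeIncMatrix ℤ)ᵀ *ᵥ (G.edgeIncMatrix ℤ *ᵥ fun _ => 1)) e := by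
        rw [← edgeIncMatrix_transpose_mul, mulVec_mulVec]
      _ = 2 * r := by rw [hrow, hcol]
  omega

theorem nontrivial_edgeSet_of_one_lt_degree {a : V} (ha : 1 < G.degree a) :
    Nontrivial G.edgeSet := by
  rw [← card_neighborFinset_eq_degree, one_lt_card] at ha
  obtain ⟨b, hb, c, hc, hbc⟩ := ha
  rw [mem_neighborFinset] at hb hc
  exact ⟨⟨s(a, b), hb⟩, ⟨s(a, c), hc⟩, fun h => hbc (Sym2.congr_right.1 (congrArg Subtype.val h))⟩

theorem hasEigen_zero_of_distMagic [Nontrivial V] {d : ℕ} (hd : d ≠ 0)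
    (hreg : G.IsRegularOfDegree d) (hdm : distMagic G) : hasEigen G 0 := by
  obtain ⟨f, k, hf⟩ := hdm
  set g : V → ℝ := fun y => ((f y : ℕ) : ℝ) + 1
  have hg : G.adjMatrix ℝ *ᵥ g = fun _ => (k : ℝ) := by
    ext x
    rw [adjMatrix_mulVec_apply, ← hf x]
    push_cast
    rfl
  have hone : G.adjMatrix ℝ *ᵥ (fun _ => 1) = fun _ => (d : ℝ) := by
    ext x
    simp [hreg x]
  refine ⟨(d : ℝ) • g - (k : ℝ) • fun _ => 1, fun h0 => ?_, ?_⟩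
  · obtain ⟨x, y, hxy⟩ := exists_pair_ne V
    have hgxy : g x = g y := by
      have hx := congrFun h0 x
      have hy := congrFun h0 y
      simp only [Pi.sub_apply, Pi.smul_apply, smul_eq_mul, Pi.zero_apply, mul_one] at hx hy
      exact mul_left_cancel₀ (Nat.cast_ne_zero.2 hd) (by linarith)
    exact hxy (f.injective (Fin.ext (by simpa [g] using hgxy)))
  · rw [mulVec_sub, mulVec_smul, mulVec_smul, hg, hone, zero_smul]
    ext
    simp [mul_comm]

theorem hasEigen_of_hasEigen_lineGraph {r : ℕ} (hreg : G.IsRegularOfDegree r) {μ : ℝ}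
    (hμ : hasEigen G.lineGraph μ) (hμ2 : μ ≠ -2) : hasEigen G (μ + 2 - r) := by
  obtain ⟨v, hv, hμv⟩ := hμ
  have hNtN : (G.edgeIncMatrix ℝ)ᵀ *ᵥ (G.edgeIncMatrix ℝ *ᵥ v) = (μ + 2) • v := by
    rw [mulVec_mulVec, edgeIncMatrix_transpose_mul, add_mulVec, hμv, smul_mulVec, one_mulVec,
      add_smul]
  have hNv : G.edgeIncMatrix ℝ *ᵥ v ≠ 0 := by
    intro h0
    rw [h0, mulVec_zero, eq_comm, smul_eq_zero] at hNtN
    exact hv (hNtN.resolve_left fun h => hμ2 (by linarith))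
  have hNNt := congrArg (G.edgeIncMatrix ℝ *ᵥ ·) hNtN
  rw [mulVec_mulVec, edgeIncMatrix_mul_transpose G hreg, mulVec_smul, add_mulVec, smul_mulVec,
    one_mulVec] at hNNt
  refine ⟨G.edgeIncMatrix ℝ *ᵥ v, hNv, ?_⟩
  rw [eq_sub_of_add_eq hNNt, ← sub_smul]

end SimpleGraph

theorem stmt8 {V : Type*} [Fintype V] (G : SimpleGraph V) (r : ℕ)
    (hr : 2 ≤ r) (hconn : G.Connected) (hreg : G.IsRegularOfDegree r)
    (hdm : distMagic G.lineGraph) : hasEigen G (2 - r) := by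
  obtain ⟨a⟩ := hconn.nonempty
  have : Nontrivial G.edgeSet :=
    G.nontrivial_edgeSet_of_one_lt_degree (a := a) (by rw [hreg a]; omega)
  simpa using G.hasEigen_of_hasEigen_lineGraph hreg
    (G.lineGraph.hasEigen_zero_of_distMagic (by omega) hreg.lineGraph hdm) (by norm_num)
end

section
/- Let G be a connected r-regular graph with r ≥ 2. If the line graph L(G) admits a closed distance magic labeling, then 1 - r is an eigenvalue of the adjacency matrix of G. -/
open SimpleGraph Finset Matrix
open scoped Classical

/-! Let `w` be the labeling of the edges, `k` its magic constant, and let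
`S u` be the sum of `w` over the edges at `u`. The closed neighbourhood of the edge `uv` in
`L(G)` consists of the edges at `u` and the edges at `v`, which share only `uv`; hence
`S u + S v = k + w(uv)`. Summing over the `r` neighbours `v` of `u` gives
`A S = (1 - r) S + r k 𝟙`, and since `A 𝟙 = r 𝟙`, the vector `S - (r k / (2r - 1)) 𝟙` is an
eigenvector for `1 - r`, as long as `S` is not constant. If it were, `w` would be constant on
the edges, which contradicts injectivity at a vertex of degree `r ≥ 2`. -/

namespace SimpleGraph

variable {V : Type*}

lemma ne_of_add_eq_add_label {G : SimpleGraph V} {S : V → ℝ} {w : Sym2 V → ℝ} {k : ℝ}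
    (hrel : ∀ u v, G.Adj u v → S u + S v = k + w s(u, v)) (hinj : Set.InjOn w G.edgeSet)
    {u v₁ v₂ : V} (h₁ : G.Adj u v₁) (h₂ : G.Adj u v₂) (hne : v₁ ≠ v₂) : S v₁ ≠ S v₂ := by
  intro heq
  have hw : w s(u, v₁) = w s(u, v₂) := by linarith [hrel u v₁ h₁, hrel u v₂ h₂]
  exact hne (Sym2.congr_right.mp (hinj h₁ h₂ hw))

variable [Fintype V] (G : SimpleGraph V)

noncomputable def edgesAt (u : V) : Finset G.edgeSet := {e | u ∈ (e : Sym2 V)}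

lemma insert_lineGraph_neighborFinset {u v : V} (h : G.Adj u v) :
    insert ⟨s(u, v), G.mem_edgeSet.mpr h⟩
        (G.lineGraph.neighborFinset ⟨s(u, v), G.mem_edgeSet.mpr h⟩) =
      G.edgesAt u ∪ G.edgesAt v := by
  ext e
  simp only [mem_insert, mem_neighborFinset, lineGraph_adj_iff_exists, mem_union, edgesAt,
    mem_filter, mem_univ, true_and, Sym2.mem_iff]
  constructor
  · rintro (rfl | ⟨-, w, rfl | rfl, hw⟩)
    · simp
    · exact Or.inl hw
    · exact Or.inr hw
  · intro hmem
    by_cases he : e = ⟨s(u, v), G.mem_edgeSet.mpr h⟩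
    · exact Or.inl he
    · refine Or.inr ⟨Ne.symm he, ?_⟩
      rcases hmem with hu | hv
      exacts [⟨u, by simp, hu⟩, ⟨v, by simp, hv⟩]

lemma edgesAt_inter_edgesAt {u v : V} (h : G.Adj u v) :
    G.edgesAt u ∩ G.edgesAt v = {⟨s(u, v), G.mem_edgeSet.mpr h⟩} := by
  ext e
  simp only [mem_inter, edgesAt, mem_filter, mem_univ, true_and, mem_singleton, Subtype.ext_iff]
  exact Sym2.mem_and_mem_iff h.ne

lemma sum_edgesAt {M : Type*} [AddCommMonoid M] (w : Sym2 V → M) (u : V) :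
    ∑ e ∈ G.edgesAt u, w e = ∑ x ∈ G.neighborFinset u, w s(u, x) := by
  refine (sum_bij (fun x hx => ⟨s(u, x), (G.mem_neighborFinset u x).mp hx⟩) ?_ ?_ ?_ ?_).symm
  · simp [edgesAt]
  · intro x₁ _ x₂ _ heq
    exact Sym2.congr_right.mp (congrArg Subtype.val heq)
  · intro e he
    simp only [edgesAt, mem_filter, mem_univ, true_and] at he
    have hspec := Sym2.other_spec' he
    refine ⟨Sym2.Mem.other' he, ?_, Subtype.ext hspec⟩
    rw [mem_neighborFinset, ← mem_edgeSet, hspec]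
    exact e.2
  · intro _ _
    rfl

lemma sum_insert_lineGraph_neighborFinset_add {M : Type*} [AddCommMonoid M] (w : Sym2 V → M)
    {u v : V} (h : G.Adj u v) :
    ∑ e ∈ insert ⟨s(u, v), G.mem_edgeSet.mpr h⟩
        (G.lineGraph.neighborFinset ⟨s(u, v), G.mem_edgeSet.mpr h⟩), w e + w s(u, v) =
      ∑ x ∈ G.neighborFinset u, w s(u, x) + ∑ x ∈ G.neighborFinset v, w s(v, x) := by
  rw [← G.sum_edgesAt, ← G.sum_edgesAt, ← sum_union_inter,
    G.insert_lineGraph_neighborFinset h, G.edgesAt_inter_edgesAt h, sum_singleton]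

variable {G}

lemma IsRegularOfDegree.sum_neighborFinset_eq {r : ℕ} (hreg : G.IsRegularOfDegree r)
    {w : Sym2 V → ℝ} {k : ℝ}
    (hrel : ∀ u v, G.Adj u v →
      ∑ x ∈ G.neighborFinset u, w s(u, x) + ∑ x ∈ G.neighborFinset v, w s(v, x) = k + w s(u, v))
    (u : V) :
    ∑ v ∈ G.neighborFinset u, ∑ x ∈ G.neighborFinset v, w s(v, x) =
      (1 - r) * ∑ x ∈ G.neighborFinset u, w s(u, x) + r * k := by
  have hsum := sum_congr rfl fun v hv => (hrel u v ((G.mem_neighborFinset u v).mp hv)).symm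
  rw [sum_add_distrib, sum_add_distrib, sum_const, sum_const, card_neighborFinset_eq_degree,
    hreg u, nsmul_eq_mul, nsmul_eq_mul] at hsum
  linarith

lemma IsRegularOfDegree.hasEigen {r : ℕ} (hreg : G.IsRegularOfDegree r) {μ b : ℝ}
    (hμ : μ ≠ r) {S : V → ℝ} (hS : ∀ u, ∑ v ∈ G.neighborFinset u, S v = μ * S u + b)
    {x y : V} (hxy : S x ≠ S y) : hasEigen G μ := by
  set c := b / (r - μ)
  have hc : b = (r - μ) * c := by
    simp only [c]
    field_simp [sub_ne_zero.mpr hμ.symm]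
  refine ⟨fun u => S u - c, fun h => hxy ?_, ?_⟩
  · have hx : S x - c = 0 := congrFun h x
    have hy : S y - c = 0 := congrFun h y
    linarith
  · ext u
    simp only [adjMatrix_mulVec_apply, sum_sub_distrib, sum_const, card_neighborFinset_eq_degree,
      hreg u, nsmul_eq_mul, hS, Pi.smul_apply, smul_eq_mul]
    linarith

end SimpleGraph

theorem stmt9 {V : Type*} [Fintype V] (G : SimpleGraph V) (r : ℕ)
    (hr : 2 ≤ r) (hconn : G.Connected) (hreg : G.IsRegularOfDegree r)
    (hcdm : closedDistMagic G.lineGraph) : hasEigen G (1 - r) := by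
  obtain ⟨f, k, hk⟩ := hcdm
  let w : Sym2 V → ℝ := fun e => if h : e ∈ G.edgeSet then (f ⟨e, h⟩ : ℕ) + 1 else 0
  have hrel : ∀ u v, G.Adj u v →
      ∑ x ∈ G.neighborFinset u, w s(u, x) + ∑ x ∈ G.neighborFinset v, w s(v, x) =
        k + w s(u, v) := by
    intro u v h
    rw [← G.sum_insert_lineGraph_neighborFinset_add w h, ← hk ⟨s(u, v), G.mem_edgeSet.mpr h⟩]
    push_cast
    simp [w]
  have hinj : Set.InjOn w G.edgeSet := by
    intro e he e' he' hee'
    simpa [w, he, he', Fin.val_inj] using hee'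
  obtain ⟨u⟩ := hconn.nonempty
  obtain ⟨v₁, h₁, v₂, h₂, hne⟩ := one_lt_card.mp <| show 1 < (G.neighborFinset u).card by
    rw [card_neighborFinset_eq_degree, hreg u]
    omega
  rw [mem_neighborFinset] at h₁ h₂
  exact hreg.hasEigen (by linarith [show (2 : ℝ) ≤ r by exact_mod_cast hr])
    (hreg.sum_neighborFinset_eq hrel) (ne_of_add_eq_add_label hrel hinj h₁ h₂ hne)
end

section
/- The complete multipartite graph H_{n,p} with p ≥ 2 partite sets each of size n ≥ 2 admits a distance magic labeling if and only if n is even or both n and p are odd. -/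
set_option maxHeartbeats 1000000

open SimpleGraph Finset Matrix
open scoped Classical

private lemma nbr_sum (n p : ℕ) (w : (Σ _ : Fin p, Fin n) → ℕ) (x : Σ _ : Fin p, Fin n) :
    ∑ y ∈ @SimpleGraph.neighborFinset _ (completeMultipartiteGraph (fun _ : Fin p => Fin n)) x
      (@SimpleGraph.neighborSetFintype _ (completeMultipartiteGraph (fun _ : Fin p => Fin n)) _
        (fun a b => Classical.propDecidable _) x), w y
      + ∑ j : Fin n, w ⟨x.1, j⟩ = ∑ y, w y := by
  classical
  have h1 : @SimpleGraph.neighborFinset _ (completeMultipartiteGraph (fun _ : Fin p => Fin n)) x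
      (@SimpleGraph.neighborSetFintype _ (completeMultipartiteGraph (fun _ : Fin p => Fin n)) _
        (fun a b => Classical.propDecidable _) x)
      = univ.filter (fun y : Σ _ : Fin p, Fin n => ¬ x.1 = y.1) := by
    ext y
    simp [SimpleGraph.mem_neighborFinset, completeMultipartiteGraph]
  have h2 : ∑ y ∈ univ.filter (fun y : Σ _ : Fin p, Fin n => x.1 = y.1), w y
      = ∑ j : Fin n, w ⟨x.1, j⟩ := by
    rw [Finset.sum_filter, ← Finset.univ_sigma_univ, Finset.sum_sigma]
    have e : ∀ i : Fin p, (∑ j2 : Fin n, if x.1 = i then w ⟨i, j2⟩ else 0)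
        = if x.1 = i then ∑ j2 : Fin n, w ⟨i, j2⟩ else 0 := by
      intro i; split <;> simp
    rw [Finset.sum_congr rfl (fun i _ => e i), Finset.sum_ite_eq]
    simp
  rw [h1, h2.symm, add_comm]
  exact Finset.sum_filter_add_sum_filter_not univ (fun y => x.1 = y.1) w

private lemma nbr_eq (n p : ℕ) (x : Σ _ : Fin p, Fin n)
    (inst : Fintype ((completeMultipartiteGraph (fun _ : Fin p => Fin n)).neighborSet x)) :
    @SimpleGraph.neighborFinset _ (completeMultipartiteGraph (fun _ : Fin p => Fin n)) x inst
      = (completeMultipartiteGraph (fun _ : Fin p => Fin n)).neighborFinset x := by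
  congr 1

private lemma magic_of_rows (n p : ℕ) (hp : 0 < p) (ρ : ℕ → ℕ → ℕ) (c : ℕ)
    (hlt : ∀ j < n, ∀ i < p, ρ j i < p)
    (hinj : ∀ j < n, ∀ i < p, ∀ i' < p, ρ j i = ρ j i' → i = i')
    (hsum : ∀ i < p, ∑ j ∈ Finset.range n, ρ j i = c) :
    distMagic (completeMultipartiteGraph (fun _ : Fin p => Fin n)) := by
  classical
  have hcard : Fintype.card (Σ _ : Fin p, Fin n) = p * n := by simp
  have hb : ∀ x : Σ _ : Fin p, Fin n,
      (x.2 : ℕ) * p + ρ x.2 x.1 < Fintype.card (Σ _ : Fin p, Fin n) := by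
    intro x
    rw [hcard]
    have h1 : ρ x.2 x.1 < p := hlt _ x.2.2 _ x.1.2
    have h2 : (x.2 : ℕ) + 1 ≤ n := x.2.2
    calc (x.2 : ℕ) * p + ρ x.2 x.1 < ((x.2 : ℕ) + 1) * p := by
          rw [Nat.add_mul, Nat.one_mul]; omega
      _ ≤ n * p := Nat.mul_le_mul_right p h2
      _ = p * n := Nat.mul_comm n p
  set F : (Σ _ : Fin p, Fin n) → Fin (Fintype.card (Σ _ : Fin p, Fin n)) :=
    fun x => ⟨(x.2 : ℕ) * p + ρ x.2 x.1, hb x⟩ with hF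
  have hFinj : Function.Injective F := by
    rintro ⟨i, j⟩ ⟨i', j'⟩ h
    have hv : (j : ℕ) * p + ρ j i = (j' : ℕ) * p + ρ j' i' := congrArg Fin.val h
    have r1 : ρ (j : ℕ) (i : ℕ) < p := hlt _ j.2 _ i.2
    have r2 : ρ (j' : ℕ) (i' : ℕ) < p := hlt _ j'.2 _ i'.2
    have m1 : ((j : ℕ) * p + ρ j i) % p = ρ (j : ℕ) (i : ℕ) := by
      rw [Nat.mul_comm, Nat.mul_add_mod, Nat.mod_eq_of_lt r1]
    have m2 : ((j' : ℕ) * p + ρ j' i') % p = ρ (j' : ℕ) (i' : ℕ) := by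
      rw [Nat.mul_comm, Nat.mul_add_mod, Nat.mod_eq_of_lt r2]
    have hrr : ρ (j : ℕ) (i : ℕ) = ρ (j' : ℕ) (i' : ℕ) := by rw [← m1, ← m2, hv]
    have hjj : (j : ℕ) = (j' : ℕ) := by
      have : (j : ℕ) * p = (j' : ℕ) * p := by omega
      exact Nat.eq_of_mul_eq_mul_right hp this
    have hii : (i : ℕ) = (i' : ℕ) := by
      apply hinj _ j.2 _ i.2 _ i'.2
      rw [hrr, hjj]
    obtain rfl : j = j' := Fin.ext hjj
    obtain rfl : i = i' := Fin.ext hii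
    rfl
  have hFbij : Function.Bijective F :=
    (Fintype.bijective_iff_injective_and_card F).mpr ⟨hFinj, by simp⟩
  refine ⟨Equiv.ofBijective F hFbij, ?_⟩
  have hS : ∀ i : Fin p, ∑ j : Fin n, ((F ⟨i, j⟩ : ℕ) + 1)
      = (∑ j ∈ Finset.range n, j * p) + c + n := by
    intro i
    have e1 : ∑ j : Fin n, ((F ⟨i, j⟩ : ℕ) + 1)
        = ∑ j ∈ Finset.range n, (j * p + ρ j (i : ℕ) + 1) := by
      rw [← Fin.sum_univ_eq_sum_range (fun j => j * p + ρ j (i : ℕ) + 1) n]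
    rw [e1]
    have e2 : ∀ j ∈ Finset.range n, j * p + ρ j (i : ℕ) + 1 = (j * p) + (ρ j (i : ℕ) + 1) := by
      intro j _; omega
    rw [Finset.sum_congr rfl e2, Finset.sum_add_distrib, Finset.sum_add_distrib,
        hsum _ i.2, Finset.sum_const, Finset.card_range, smul_eq_mul, Nat.mul_one]
    omega
  refine ⟨(∑ y : Σ _ : Fin p, Fin n, ((F y : ℕ) + 1))
      - ((∑ j ∈ Finset.range n, j * p) + c + n), ?_⟩
  intro x
  have hkey := nbr_sum n p (fun y => ((F y : ℕ) + 1)) x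
  have hSx := hS x.1
  have hcoe : ∀ y, (Equiv.ofBijective F hFbij) y = F y := fun _ => rfl
  simp only [hcoe]
  simp only [hF, Fin.val_mk] at hkey hSx
  rw [← hkey, hSx, Nat.add_sub_cancel]

private lemma forward_dir (n p : ℕ) (hn : 2 ≤ n) (hp : 2 ≤ p)
    (h : distMagic (completeMultipartiteGraph (fun _ : Fin p => Fin n))) :
    Even n ∨ (Odd n ∧ Odd p) := by
  classical
  obtain ⟨f, k, hf⟩ := h
  set w : (Σ _ : Fin p, Fin n) → ℕ := fun y => (f y : ℕ) + 1 with hw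
  set T := ∑ y : Σ _ : Fin p, Fin n, w y with hT
  have hS : ∀ i : Fin p, k + ∑ j : Fin n, w ⟨i, j⟩ = T := by
    intro i
    have hx := hf ⟨i, ⟨0, by omega⟩⟩
    have hkey := nbr_sum n p w ⟨i, ⟨0, by omega⟩⟩
    rw [← hx]
    exact hkey
  have hN : Fintype.card (Σ _ : Fin p, Fin n) = p * n := by simp
  have hTv : 2 * T = (p * n) * (p * n + 1) := by
    have h1 : T = ∑ t : Fin (Fintype.card (Σ _ : Fin p, Fin n)), ((t : ℕ) + 1) := by
      rw [hT, hw]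
      exact Fintype.sum_bijective f f.bijective _ _ (fun y => rfl)
    rw [h1, hN, Fin.sum_univ_eq_sum_range (fun t => t + 1) (p * n)]
    rw [Finset.sum_add_distrib, Finset.sum_const, Finset.card_range, smul_eq_mul, Nat.mul_one]
    have h2 := Finset.sum_range_id_mul_two (p * n)
    have h3 : 0 < p * n := Nat.mul_pos (by omega) (by omega)
    set N := p * n
    have h4 : N * (N - 1) + 2 * N = N * (N + 1) := by
      rw [Nat.mul_comm 2 N, ← Nat.mul_add]
      congr 1
      omega
    omega
  have hsum : T = ∑ i : Fin p, ∑ j : Fin n, w ⟨i, j⟩ := by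
    rw [hT, ← Finset.univ_sigma_univ, Finset.sum_sigma]
  have hci : ∀ i : Fin p, ∑ j : Fin n, w ⟨i, j⟩ = T - k := by
    intro i; have := hS i; omega
  have hk0 : k ≤ T := by have := hS ⟨0, by omega⟩; omega
  have hTc : T = p * (T - k) := by
    have h5 : ∑ i : Fin p, ∑ j : Fin n, w ⟨i, j⟩ = p * (T - k) := by
      rw [Finset.sum_congr rfl (fun i _ => hci i), Finset.sum_const, Finset.card_univ,
        Fintype.card_fin, smul_eq_mul]
    calc T = ∑ i : Fin p, ∑ j : Fin n, w ⟨i, j⟩ := hsum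
      _ = p * (T - k) := h5
  have hc2 : 2 * (T - k) = n * (p * n + 1) := by
    apply Nat.eq_of_mul_eq_mul_left (show 0 < p by omega)
    calc p * (2 * (T - k)) = 2 * (p * (T - k)) := by ring
      _ = 2 * T := by rw [← hTc]
      _ = (p * n) * (p * n + 1) := hTv
      _ = p * (n * (p * n + 1)) := by ring
  rcases Nat.even_or_odd n with he | ho
  · exact Or.inl he
  · refine Or.inr ⟨ho, ?_⟩
    by_contra hpodd
    have hpe : Even p := Nat.not_odd_iff_even.mp hpodd
    have hodd : Odd (n * (p * n + 1)) := by
      apply ho.mul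
      exact Even.add_one (hpe.mul_right n)
    rw [← hc2] at hodd
    exact (Nat.not_odd_iff_even.mpr (even_two_mul (T - k))) hodd

private lemma even_case (n p m : ℕ) (hm : n = m + m) (hp : 2 ≤ p) :
    distMagic (completeMultipartiteGraph (fun _ : Fin p => Fin n)) := by
  apply magic_of_rows n p (by omega) (fun j i => if j < m then i else p - 1 - i) (m * (p - 1))
  · intro j hj i hi; split <;> omega
  · intro j hj i hi i' hi' h; revert h; split <;> omega
  · intro i hi
    rw [Finset.range_eq_Ico, ← Finset.sum_Ico_consecutive _ (Nat.zero_le m) (by omega : m ≤ n)]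
    have e1 : ∀ j ∈ Finset.Ico 0 m, (if j < m then i else p - 1 - i) = i := by
      intro j hj; rw [Finset.mem_Ico] at hj; rw [if_pos hj.2]
    have e2 : ∀ j ∈ Finset.Ico m n, (if j < m then i else p - 1 - i) = p - 1 - i := by
      intro j hj; rw [Finset.mem_Ico] at hj; rw [if_neg (by omega)]
    rw [Finset.sum_congr rfl e1, Finset.sum_congr rfl e2, Finset.sum_const, Finset.sum_const,
        Nat.card_Ico, Nat.card_Ico, smul_eq_mul, smul_eq_mul]
    have h1 : n - m = m := by omega
    rw [h1, Nat.sub_zero, ← Nat.mul_add]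
    congr 1
    omega

private lemma odd_case (n p q k : ℕ) (hnq : n = 2 * q + 3) (hpk : p = 2 * k + 1) :
    distMagic (completeMultipartiteGraph (fun _ : Fin p => Fin n)) := by
  apply magic_of_rows n p (by omega)
    (fun j i => if j = 0 then i
      else if j = 1 then (if i ≤ k then i + k else i - k - 1)
      else if j = 2 then (if i ≤ k then 2 * k - 2 * i else 4 * k + 1 - 2 * i)
      else if j < 3 + q then i else p - 1 - i) (3 * k + q * (p - 1))
  · intro j hj i hi; split_ifs <;> omega
  · intro j hj i hi i' hi' h; revert h; split_ifs <;> omega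
  · intro i hi
    rw [Finset.range_eq_Ico,
        ← Finset.sum_Ico_consecutive _ (by omega : (0:ℕ) ≤ 3 + q) (by omega : 3 + q ≤ n),
        ← Finset.sum_Ico_consecutive _ (by omega : (0:ℕ) ≤ 3) (by omega : 3 ≤ 3 + q)]
    have h0 : ∑ j ∈ Finset.Ico 0 3, (if j = 0 then i
        else if j = 1 then (if i ≤ k then i + k else i - k - 1)
        else if j = 2 then (if i ≤ k then 2 * k - 2 * i else 4 * k + 1 - 2 * i)
        else if j < 3 + q then i else p - 1 - i) = 3 * k := by
      rw [← Finset.range_eq_Ico]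
      rw [Finset.sum_range_succ, Finset.sum_range_succ, Finset.sum_range_one]
      norm_num
      split_ifs <;> omega
    have e1 : ∀ j ∈ Finset.Ico 3 (3 + q), (if j = 0 then i
        else if j = 1 then (if i ≤ k then i + k else i - k - 1)
        else if j = 2 then (if i ≤ k then 2 * k - 2 * i else 4 * k + 1 - 2 * i)
        else if j < 3 + q then i else p - 1 - i) = i := by
      intro j hj; rw [Finset.mem_Ico] at hj
      rw [if_neg (by omega), if_neg (by omega), if_neg (by omega), if_pos (by omega)]
    have e2 : ∀ j ∈ Finset.Ico (3 + q) n, (if j = 0 then i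
        else if j = 1 then (if i ≤ k then i + k else i - k - 1)
        else if j = 2 then (if i ≤ k then 2 * k - 2 * i else 4 * k + 1 - 2 * i)
        else if j < 3 + q then i else p - 1 - i) = p - 1 - i := by
      intro j hj; rw [Finset.mem_Ico] at hj
      rw [if_neg (by omega), if_neg (by omega), if_neg (by omega), if_neg (by omega)]
    rw [h0, Finset.sum_congr rfl e1, Finset.sum_congr rfl e2, Finset.sum_const, Finset.sum_const,
        Nat.card_Ico, Nat.card_Ico, smul_eq_mul, smul_eq_mul]
    have h1 : 3 + q - 3 = q := by omega
    have h2 : n - (3 + q) = q := by omega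
    rw [h1, h2]
    have h3 : q * i + q * (p - 1 - i) = q * (p - 1) := by
      rw [← Nat.mul_add]; congr 1; omega
    omega

theorem stmt10 (n p : ℕ) (hn : 2 ≤ n) (hp : 2 ≤ p) :
    distMagic (completeMultipartiteGraph (fun _ : Fin p => Fin n)) ↔
      Even n ∨ (Odd n ∧ Odd p) := by
  constructor
  · exact forward_dir n p hn hp
  · rintro (he | ⟨hon, hop⟩)
    · obtain ⟨m, hm⟩ := he
      exact even_case n p m hm hp
    · obtain ⟨k, hk⟩ := hop
      obtain ⟨q', hq'⟩ := hon
      exact odd_case n p (q' - 1) k (by omega) hk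
end

section
/- If G is a distance-regular graph of diameter 3 with intersection array {r, b₁, b₂; 1, c₂, c₃} admitting a distance magic labeling (so 0 is an adjacency eigenvalue), then c₃ ≠ r; in particular G is neither bipartite nor antipodal. -/
open SimpleGraph Finset Matrix
open scoped Classical

noncomputable def IsDRG3 {V : Type*} [Fintype V] (G : SimpleGraph V)
    (r b1 b2 c2 c3 : ℕ) : Prop :=
  G.Connected ∧ (∃ u v : V, G.dist u v = 3) ∧ (∀ u v : V, G.dist u v ≤ 3) ∧
    G.IsRegularOfDegree r ∧
    (∀ u v : V, G.dist u v = 1 →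
      ((G.neighborFinset u).filter (fun w => G.dist w v = 0)).card = 1 ∧
      ((G.neighborFinset u).filter (fun w => G.dist w v = 2)).card = b1) ∧
    (∀ u v : V, G.dist u v = 2 →
      ((G.neighborFinset u).filter (fun w => G.dist w v = 1)).card = c2 ∧
      ((G.neighborFinset u).filter (fun w => G.dist w v = 3)).card = b2) ∧
    (∀ u v : V, G.dist u v = 3 →
      ((G.neighborFinset u).filter (fun w => G.dist w v = 2)).card = c3)
private lemma fin2_aux : ∀ a b c : Fin 2, a ≠ b → (a = c ↔ ¬ b = c) := by decide

private lemma color_walk_parity {V : Type*} {G : SimpleGraph V} (C : G.Coloring (Fin 2))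
    {u v : V} (p : G.Walk u v) : C u = C v ↔ Even p.length := by
  induction p with
  | nil => simp
  | @cons a b c h p ih =>
      rw [Walk.length_cons, Nat.even_add_one, ← ih]
      exact fin2_aux _ _ _ (C.valid h)

/-- fiber sum of `g` over vertices at distance `d` from `x` -/
noncomputable def fibS {V : Type*} [Fintype V] (G : SimpleGraph V) (g : V → ℤ) (d : ℕ) (x : V) : ℤ :=
  ∑ y ∈ Finset.univ.filter (fun y => G.dist x y = d), g y

/-- number of neighbors of `x` at distance `d` from `y` -/
noncomputable def cnt3 {V : Type*} [Fintype V] (G : SimpleGraph V) (d : ℕ) (x y : V) : ℕ :=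
  ((G.neighborFinset x).filter (fun w => G.dist w y = d)).card

private lemma core_ne {V : Type*} [Fintype V] (G : SimpleGraph V) (r b1 b2 c2 c3 : ℕ)
    (hdrg : IsDRG3 G r b1 b2 c2 c3) (hdm : distMagic G) : c3 ≠ r := by
  obtain ⟨hconn, ⟨x0, y0, hxy⟩, hle3, hreg, hI1, hI2, hI3⟩ := hdrg
  obtain ⟨f, k, hf⟩ := hdm
  intro hc3
  classical
  set g : V → ℤ := fun x => ((f x : ℕ) : ℤ) + 1 with hg
  have hgk : ∀ x : V, ∑ y ∈ G.neighborFinset x, g y = (k : ℤ) := by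
    intro x
    have h := hf x
    have h2 : ((∑ y ∈ G.neighborFinset x, ((f y : ℕ) + 1) : ℕ) : ℤ) = (k : ℤ) := by rw [h]
    push_cast at h2
    simpa [hg] using h2
  set S : ℤ := ∑ y : V, g y with hS
  have hNcard : ∀ x : V, (G.neighborFinset x).card = r := by
    intro x; rw [card_neighborFinset_eq_degree, hreg x]
  -- fiberwise decomposition of a sum over all vertices
  have fib : ∀ (x : V) (F : V → ℤ), ∑ y : V, F y =
      ∑ d ∈ Finset.range 4, ∑ y ∈ univ.filter (fun y => G.dist x y = d), F y :=
    fun x F => (Finset.sum_fiberwise_of_maps_to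
      (fun y _ => Finset.mem_range.mpr (by have := hle3 x y; omega)) F).symm
  -- fiber at distance 0 is a singleton
  have fib0 : ∀ x : V, univ.filter (fun y => G.dist x y = 0) = {x} := by
    intro x; ext y
    simp only [mem_filter, mem_univ, true_and, mem_singleton, hconn.dist_eq_zero_iff]
    exact ⟨fun h => h.symm, fun h => h.symm⟩
  -- fiber at distance 1 is the neighbor finset
  have fib1 : ∀ x : V, univ.filter (fun y => G.dist x y = 1) = G.neighborFinset x := by
    intro x; ext y; simp [dist_eq_one_iff_adj]
  have fibS0 : ∀ x : V, fibS G g 0 x = g x := by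
    intro x; unfold fibS; rw [fib0 x, Finset.sum_singleton]
  have fibS1 : ∀ x : V, fibS G g 1 x = (k : ℤ) := by
    intro x; unfold fibS; rw [fib1 x]; exact hgk x
  -- partition of S
  have Hpart : ∀ x : V, g x + (k : ℤ) + fibS G g 2 x + fibS G g 3 x = S := by
    intro x
    have e : S = ∑ d ∈ Finset.range 4, fibS G g d x := by rw [hS]; exact fib x g
    rw [Finset.sum_range_succ, Finset.sum_range_succ, Finset.sum_range_succ,
      Finset.sum_range_one, fibS0, fibS1] at e
    linarith
  -- counting partition of the neighborhood
  have cpart : ∀ x y : V, cnt3 G 0 x y + cnt3 G 1 x y + cnt3 G 2 x y + cnt3 G 3 x y = r := by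
    intro x y
    have e : (G.neighborFinset x).card =
        ∑ d ∈ Finset.range 4, ((G.neighborFinset x).filter (fun w => G.dist w y = d)).card :=
      Finset.card_eq_sum_card_fiberwise
        (fun w _ => Finset.mem_range.mpr (by have := hle3 w y; omega))
    rw [hNcard x, Finset.sum_range_succ, Finset.sum_range_succ, Finset.sum_range_succ,
      Finset.sum_range_one] at e
    unfold cnt3
    omega
  have adj_of_mem : ∀ {x w : V}, w ∈ G.neighborFinset x → G.Adj x w := by
    intro x w hw; exact (G.mem_neighborFinset x w).mp hw
  have ndist : ∀ {x w : V}, w ∈ G.neighborFinset x → G.dist w x = 1 := by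
    intro x w hw; exact dist_eq_one_iff_adj.mpr (adj_of_mem hw).symm
  -- a zero-count helper
  have cnt_zero : ∀ (d : ℕ) (x y : V),
      (∀ w ∈ G.neighborFinset x, G.dist w y ≠ d) → cnt3 G d x y = 0 := by
    intro d x y h
    unfold cnt3
    rw [Finset.card_eq_zero, Finset.filter_eq_empty_iff]
    exact h
  -- triangle facts
  have tri1 : ∀ {x w : V}, w ∈ G.neighborFinset x → ∀ y, G.dist w y ≤ 1 + G.dist x y := by
    intro x w hw y
    calc G.dist w y ≤ G.dist w x + G.dist x y := hconn.dist_triangle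
    _ = 1 + G.dist x y := by rw [ndist hw]
  have tri2 : ∀ {x w : V}, w ∈ G.neighborFinset x → ∀ y, G.dist x y ≤ 1 + G.dist w y := by
    intro x w hw y
    calc G.dist x y ≤ G.dist x w + G.dist w y := hconn.dist_triangle
    _ = 1 + G.dist w y := by rw [dist_eq_one_iff_adj.mpr (adj_of_mem hw)]
  -- count values
  have c1_0 : ∀ x : V, cnt3 G 1 x x = r := by
    intro x
    unfold cnt3
    rw [Finset.filter_true_of_mem (fun w hw => ndist hw)]
    exact hNcard x
  have c1_1 : ∀ x y : V, G.dist x y = 1 → (cnt3 G 1 x y : ℤ) = (r : ℤ) - 1 - b1 := by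
    intro x y hd
    have h0 : cnt3 G 0 x y = 1 := (hI1 x y hd).1
    have h2 : cnt3 G 2 x y = b1 := (hI1 x y hd).2
    have h3 : cnt3 G 3 x y = 0 := cnt_zero 3 x y (fun w hw => by have := tri1 hw y; omega)
    have := cpart x y
    omega
  have c1_2 : ∀ x y : V, G.dist x y = 2 → cnt3 G 1 x y = c2 := fun x y hd => (hI2 x y hd).1
  have c1_3 : ∀ x y : V, G.dist x y = 3 → cnt3 G 1 x y = 0 := by
    intro x y hd
    exact cnt_zero 1 x y (fun w hw => by have := tri2 hw y; omega)
  have c3_0 : ∀ x : V, cnt3 G 3 x x = 0 := by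
    intro x
    exact cnt_zero 3 x x (fun w hw => by rw [ndist hw]; omega)
  have c3_1 : ∀ x y : V, G.dist x y = 1 → cnt3 G 3 x y = 0 := by
    intro x y hd
    exact cnt_zero 3 x y (fun w hw => by have := tri1 hw y; omega)
  have c3_2 : ∀ x y : V, G.dist x y = 2 → cnt3 G 3 x y = b2 := fun x y hd => (hI2 x y hd).2
  have c3_3 : ∀ x y : V, G.dist x y = 3 → cnt3 G 3 x y = 0 := by
    intro x y hd
    have h0 : cnt3 G 0 x y = 0 := by
      refine cnt_zero 0 x y (fun w hw hdw => ?_)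
      have : w = y := ((hconn w y).dist_eq_zero_iff).mp hdw
      subst this
      have := ndist hw
      rw [dist_comm] at hd
      omega
    have h1 : cnt3 G 1 x y = 0 := c1_3 x y hd
    have h2 : cnt3 G 2 x y = c3 := hI3 x y hd
    have := cpart x y
    omega
  -- the exchange identity
  have EX : ∀ (d : ℕ) (x : V), ∑ w ∈ G.neighborFinset x, fibS G g d w =
      ∑ y : V, (cnt3 G d x y : ℤ) * g y := by
    intro d x
    unfold fibS cnt3
    simp only [Finset.sum_filter]
    rw [Finset.sum_comm]
    refine Finset.sum_congr rfl fun y _ => ?_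
    rw [← Finset.sum_filter, Finset.sum_const, nsmul_eq_mul]
  -- fiber decomposition of the right-hand side
  have fibRHS : ∀ (d : ℕ) (x : V), ∑ y : V, (cnt3 G d x y : ℤ) * g y =
      (cnt3 G d x x : ℤ) * g x
      + ∑ y ∈ univ.filter (fun y => G.dist x y = 1), (cnt3 G d x y : ℤ) * g y
      + ∑ y ∈ univ.filter (fun y => G.dist x y = 2), (cnt3 G d x y : ℤ) * g y
      + ∑ y ∈ univ.filter (fun y => G.dist x y = 3), (cnt3 G d x y : ℤ) * g y := by
    intro d x
    rw [fib x (fun y => (cnt3 G d x y : ℤ) * g y)]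
    rw [Finset.sum_range_succ, Finset.sum_range_succ, Finset.sum_range_succ,
      Finset.sum_range_one, fib0 x, Finset.sum_singleton]
  -- constant substitution on a fiber
  have fiber_const : ∀ (d j : ℕ) (x : V) (c : ℤ),
      (∀ y : V, G.dist x y = j → (cnt3 G d x y : ℤ) = c) →
      ∑ y ∈ univ.filter (fun y => G.dist x y = j), (cnt3 G d x y : ℤ) * g y =
        c * fibS G g j x := by
    intro d j x c hc
    unfold fibS
    rw [Finset.mul_sum]
    refine Finset.sum_congr rfl fun y hy => ?_
    rw [hc y (Finset.mem_filter.mp hy).2]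
  -- Equation A
  have EqA : ∀ x : V, (r : ℤ) * k =
      (r : ℤ) * g x + ((r : ℤ) - 1 - b1) * k + (c2 : ℤ) * fibS G g 2 x := by
    intro x
    have lhs : ∑ w ∈ G.neighborFinset x, fibS G g 1 w = (r : ℤ) * k := by
      rw [Finset.sum_congr rfl fun w _ => fibS1 w, Finset.sum_const, hNcard x, nsmul_eq_mul]
    have e := EX 1 x
    rw [lhs, fibRHS 1 x, c1_0 x,
      fiber_const 1 1 x ((r : ℤ) - 1 - b1) (fun y hy => c1_1 x y hy),
      fiber_const 1 2 x (c2 : ℤ) (fun y hy => by rw [c1_2 x y hy]),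
      fiber_const 1 3 x 0 (fun y hy => by rw [c1_3 x y hy]; norm_num)] at e
    rw [fibS1 x] at e
    linarith [e]
  -- Equation B (uses hc3 : c3 = r)
  have EqB : ∀ x : V, ∑ w ∈ G.neighborFinset x, fibS G g 3 w = (b2 : ℤ) * fibS G g 2 x := by
    intro x
    have e := EX 3 x
    rw [fibRHS 3 x, c3_0 x,
      fiber_const 3 1 x 0 (fun y hy => by rw [c3_1 x y hy]; norm_num),
      fiber_const 3 2 x (b2 : ℤ) (fun y hy => by rw [c3_2 x y hy]),
      fiber_const 3 3 x 0 (fun y hy => by rw [c3_3 x y hy]; norm_num)] at e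
    rw [e]; ring
  -- the key constant identity
  have key : ∀ x : V, (c2 : ℤ) * ((b2 : ℤ) * fibS G g 2 x) =
      (r : ℤ) * ((c2 : ℤ) * S - c2 * k - r * k + ((r : ℤ) - 1 - b1) * k)
        + ((r : ℤ) - c2) * k := by
    intro x
    have e1 : (c2 : ℤ) * ((b2 : ℤ) * fibS G g 2 x) =
        ∑ w ∈ G.neighborFinset x, (c2 : ℤ) * fibS G g 3 w := by
      rw [← Finset.mul_sum, EqB x]
    have e2 : ∀ w ∈ G.neighborFinset x, (c2 : ℤ) * fibS G g 3 w =
        ((c2 : ℤ) * S - c2 * k - r * k + ((r : ℤ) - 1 - b1) * k) + ((r : ℤ) - c2) * g w := by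
      intro w _
      have h1 := EqA w
      have h2 := Hpart w
      linear_combination (c2 : ℤ) * h2 + h1
    rw [e1, Finset.sum_congr rfl e2, Finset.sum_add_distrib, Finset.sum_const, hNcard x,
      nsmul_eq_mul, ← Finset.mul_sum, hgk x]
  -- finish
  have hx0y0 : x0 ≠ y0 := by
    intro h; subst h; rw [SimpleGraph.dist_self] at hxy; omega
  have hgne : g x0 ≠ g y0 := by
    intro h
    apply hx0y0
    apply f.injective
    have : ((f x0 : ℕ) : ℤ) = ((f y0 : ℕ) : ℤ) := by simpa [hg] using h
    exact Fin.val_injective (by exact_mod_cast this)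
  -- b2 ≥ 1 and r ≥ 1
  obtain ⟨p, hp⟩ := exists_walk_of_dist_ne_zero (by omega : G.dist x0 y0 ≠ 0)
  rw [hxy] at hp
  obtain ⟨w1, hadj, q, rfl, hq⟩ : ∃ (w1 : V) (h : G.Adj x0 w1) (q : G.Walk w1 y0),
      p = Walk.cons h q ∧ q.length = 2 := by
    cases p with
    | nil => simp at hp
    | cons h q => exact ⟨_, h, q, rfl, by simpa using hp⟩
  have hw1mem : w1 ∈ G.neighborFinset x0 := (G.mem_neighborFinset x0 w1).mpr hadj
  have hdw1 : G.dist w1 y0 = 2 := by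
    have hle : G.dist w1 y0 ≤ 2 := by have := SimpleGraph.dist_le q; omega
    have hge := tri2 hw1mem y0
    omega
  have hr1 : 1 ≤ r := by
    have := hNcard x0
    have : 0 < (G.neighborFinset x0).card := Finset.card_pos.mpr ⟨w1, hw1mem⟩
    omega
  have hb2 : 1 ≤ b2 := by
    have hb := (hI2 w1 y0 hdw1).2
    have hmem : x0 ∈ (G.neighborFinset w1).filter (fun w => G.dist w y0 = 3) := by
      refine Finset.mem_filter.mpr ⟨(G.mem_neighborFinset w1 x0).mpr hadj.symm, hxy⟩
    have : 0 < ((G.neighborFinset w1).filter (fun w => G.dist w y0 = 3)).card :=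
      Finset.card_pos.mpr ⟨x0, hmem⟩
    omega
  have final : (b2 : ℤ) * r * (g x0 - g y0) = 0 := by
    have A0 := EqA x0
    have A1 := EqA y0
    have k0 := key x0
    have k1 := key y0
    linear_combination (b2 : ℤ) * A1 - (b2 : ℤ) * A0 - k0 + k1
  have hne : (b2 : ℤ) * r * (g x0 - g y0) ≠ 0 := by
    have h1 : (b2 : ℤ) ≠ 0 := by exact_mod_cast (by omega : b2 ≠ 0)
    have h2 : (r : ℤ) ≠ 0 := by exact_mod_cast (by omega : r ≠ 0)
    exact mul_ne_zero (mul_ne_zero h1 h2) (sub_ne_zero.mpr hgne)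
  exact hne final

theorem stmt19 {V : Type*} [Fintype V] (G : SimpleGraph V) (r b1 b2 c2 c3 : ℕ)
    (hdrg : IsDRG3 G r b1 b2 c2 c3) (hdm : distMagic G) :
    c3 ≠ r ∧ ¬ G.Colorable 2 ∧
      ¬ (∀ u v w : V, G.dist u v = 3 → G.dist u w = 3 → v = w ∨ G.dist v w = 3) := by
  have hne := core_ne G r b1 b2 c2 c3 hdrg hdm
  obtain ⟨hconn, ⟨x0, y0, hxy⟩, hle3, hreg, hI1, hI2, hI3⟩ := hdrg
  have ge2 : ∀ w ∈ G.neighborFinset x0, 2 ≤ G.dist w y0 ∧ G.dist w y0 ≤ 3 := by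
    intro w hw
    have hadj : G.Adj x0 w := (G.mem_neighborFinset x0 w).mp hw
    have h1 : G.dist x0 w = 1 := dist_eq_one_iff_adj.mpr hadj
    have htri : G.dist x0 y0 ≤ G.dist x0 w + G.dist w y0 := hconn.dist_triangle
    exact ⟨by omega, hle3 w y0⟩
  have reduce : (∀ w ∈ G.neighborFinset x0, G.dist w y0 = 2) → False := by
    intro hall
    apply hne
    have e := hI3 x0 y0 hxy
    rw [Finset.filter_true_of_mem hall] at e
    rw [← e, card_neighborFinset_eq_degree, hreg x0]
  refine ⟨hne, ?_, ?_⟩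
  · intro hcol
    obtain ⟨C⟩ := hcol
    obtain ⟨p, hp⟩ := exists_walk_of_dist_ne_zero (by omega : G.dist x0 y0 ≠ 0)
    rw [hxy] at hp
    have hCxy : ¬ (C x0 = C y0) := by
      rw [color_walk_parity C p, hp]
      decide
    apply reduce
    intro w hw
    have hadj : G.Adj x0 w := (G.mem_neighborFinset x0 w).mp hw
    have hCw : C w = C y0 := by
      by_contra hcon
      exact hCxy ((fin2_aux _ _ _ (C.valid hadj)).mpr hcon)
    have hb := ge2 w hw
    obtain ⟨q, hq⟩ := exists_walk_of_dist_ne_zero (by omega : G.dist w y0 ≠ 0)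
    have heven : Even q.length := (color_walk_parity C q).mp hCw
    rw [hq] at heven
    obtain ⟨m, hm⟩ := heven
    omega
  · intro hant
    apply reduce
    intro w hw
    have hadj : G.Adj x0 w := (G.mem_neighborFinset x0 w).mp hw
    have hb := ge2 w hw
    by_contra hcon
    have hd3 : G.dist w y0 = 3 := by omega
    have h1 := hant y0 x0 w (by rw [SimpleGraph.dist_comm]; exact hxy)
      (by rw [SimpleGraph.dist_comm]; exact hd3)
    rcases h1 with h | h
    · exact G.irrefl (h ▸ hadj)
    · rw [dist_eq_one_iff_adj.mpr hadj] at h; omega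
end
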